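/- Let v₁ = (0,0,0), v₂ = (1000,0,0), v₃ = (262,674,0), v₄ = (433,−130,569), v₅ = (−197,506,123), v₆ = (316,−334,−54), v₇ = (374,225,773), v₈ = (41,−525,203), v₉ = (670,152,−179), v₁₀ = (405,640,653) in ℝ³, and define edge vectors eᵢ = v_{i+1} − vᵢ for i = 1, …, 9 and e₁₀ = v₁ − v₁₀. Then there is no w ∈ ℝ³ such that (−1)^{i+1} (w · eᵢ) > 0 for every i ∈ {1, …, 10}. -/

import Mathlib

/-- The vertices of the paper's 10-stick polygonal realization of the knot `8_10`.
Here `vert8_10 i` is the paper's vertex `v_(i+1)`. -/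
noncomputable def vert8_10 : Fin 10 → (Fin 3 → ℝ) :=
  ![![0, 0, 0], ![1000, 0, 0], ![262, 674, 0], ![433, -130, 569], ![-197, 506, 123], ![316, -334, -54], ![374, 225, 773], ![41, -525, 203], ![670, 152, -179], ![405, 640, 653]]

/-- The edge vectors `eᵢ = v_(i+1) − vᵢ` (cyclically, so `e₁₀ = v₁ − v₁₀`);
here `edge8_10 i` is the paper's `e_(i+1)`, using wrap-around addition on `Fin 10`. -/
noncomputable def edge8_10 (i : Fin 10) : Fin 3 → ℝ :=
  vert8_10 (i + 1) - vert8_10 i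

/-!
This is the easy half of Gordan's alternative. The signed edges `(-1)^i eᵢ` admit a nontrivial
nonnegative linear relation, supported on `e₁, e₆, e₉, e₁₀`:
`10338671 e₁ - 71272000 e₆ + 54751000 e₉ - 20504000 e₁₀ = 0`.
Pairing it with `w` gives a positive combination of the numbers `(-1)^i (w · eᵢ)` equal to `0`,
so they cannot all be positive.
-/

theorem not_forall_pos_of_sum_smul_eq_zero {𝕜 M ι : Type*} [Field 𝕜] [LinearOrder 𝕜]
    [IsStrictOrderedRing 𝕜] [AddCommGroup M] [Module 𝕜 M] [Fintype ι]
    (φ : M →ₗ[𝕜] 𝕜) {u : ι → M} {c : ι → 𝕜} (hc : 0 ≤ c) (hc₀ : c ≠ 0)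
    (hsum : ∑ i, c i • u i = 0) : ¬ ∀ i, 0 < φ (u i) := by
  intro hpos
  obtain ⟨k, hk⟩ : ∃ k, c k ≠ 0 := Function.ne_iff.mp hc₀
  have hterm : ∀ i, 0 ≤ c i * φ (u i) := fun i => mul_nonneg (hc i) (hpos i).le
  have hlt : 0 < ∑ i, c i * φ (u i) :=
    Finset.sum_pos' (fun i _ => hterm i)
      ⟨k, Finset.mem_univ k, mul_pos ((hc k).lt_of_ne' hk) (hpos k)⟩
  simp only [← smul_eq_mul, ← map_smul, ← map_sum, hsum, map_zero] at hlt
  exact hlt.false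

noncomputable def gordanWeight8_10 : Fin 10 → ℝ :=
  ![10338671, 0, 0, 0, 0, 71272000, 0, 0, 54751000, 20504000]

theorem sum_gordanWeight8_10_smul_signed_edge :
    ∑ i, gordanWeight8_10 i • ((-1 : ℝ) ^ (i : ℕ) • edge8_10 i) = 0 := by
  ext j
  fin_cases j <;>
    simp [Fin.sum_univ_succ, gordanWeight8_10, edge8_10, vert8_10] <;> norm_num

/-- There is no `w ∈ ℝ³` such that `(−1)^(i+1) (w · eᵢ) > 0` for every
`i ∈ {1, …, 10}`: no projection of this polygon (the knot `8_10`) to a line has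
5 local maxima. (With 0-based indexing `i : Fin 10`, the sign is `(−1)^i`.) -/
theorem no_alternating_direction_8_10 :
    ¬ ∃ w : Fin 3 → ℝ, ∀ i : Fin 10,
        0 < (-1 : ℝ) ^ (i : ℕ) * ∑ j : Fin 3, w j * edge8_10 i j := by
  rintro ⟨w, hw⟩
  refine not_forall_pos_of_sum_smul_eq_zero (dotProductBilin ℝ ℝ w) (c := gordanWeight8_10)
    ?_ ?_ sum_gordanWeight8_10_smul_signed_edge fun i => ?_
  · intro i; fin_cases i <;> simp [gordanWeight8_10]
  · intro h; simpa [gordanWeight8_10] using congr_fun h 0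
  · simpa [dotProduct, Finset.mul_sum, mul_left_comm] using hw i
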